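/- Let β_1, β_2 > 0 and let {θ_j}_{j≥1} ⊂ (0, ∞) be a sequence such that either β_1 ≤ θ_j ≤ 1 − β_2 < 1 for all j, or 1 < 1 + β_1 ≤ θ_j ≤ β_2 for all j. For E ∈ ℝ define the 2×2 real matrix M_j(E) with rows ((E² − 1)/θ_j, −E θ_j) and (E/θ_j, −θ_j). Then for every ε_1 > 0 there exist E_0 > 0 and ξ > 0 (depending only on ε_1, β_1, β_2) such that for all E ∈ ℝ with |E| < E_0 and all n ≥ 1: |(1/n) log‖M_n(E) ⋯ M_1(E)‖ − (1/n) log‖M_n(0) ⋯ M_1(0)‖| ≤ ε_1 + ξ/n. -/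

import Mathlib

open scoped Matrix.Norms.L2Operator

noncomputable def jacobiM (θj E : ℝ) : Matrix (Fin 2) (Fin 2) ℝ :=
  !![(E ^ 2 - 1) / θj, -E * θj; E / θj, -θj]

/-- The ordered product `L (n-1) * ⋯ * L 1 * L 0`. -/
noncomputable def prodRev (L : ℕ → Matrix (Fin 2) (Fin 2) ℝ) (n : ℕ) :
    Matrix (Fin 2) (Fin 2) ℝ :=
  ((List.range n).reverse.map L).prod

/-!
At `E = 0` the transfer matrix `M(0) = diag(-1/θ, -θ)` is diagonal, so the norm of the product
is exactly `P_n = ∏ max(θ_j, 1/θ_j)`. The uniform gap between `θ_j` and `1/θ_j` makes the cone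
around the dominant coordinate axis invariant under every `M_j(E)` once `|E|` is small, with
the dominant coordinate growing by at least `(1 - 2|E|) max(θ_j, 1/θ_j)` per step, while
`‖M_j(E)‖ ≤ (1 + 2|E|) max(θ_j, 1/θ_j)`. Hence `‖M_n(E) ⋯ M_1(E)‖ / P_n` lies between
`(1 - 2|E|)^n` and `(1 + 2|E|)^n`, and the two finite-volume exponents differ by at most
`max(-log(1 - 2|E|), log(1 + 2|E|))`, uniformly in `n`.
-/

open Matrix Finset

namespace Matrix

lemma abs_apply_le_l2_opNorm {m n : Type*} [Fintype m] [Fintype n] [DecidableEq n]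
    (A : Matrix m n ℝ) (i : m) (j : n) : |A i j| ≤ ‖A‖ := by
  calc |A i j| = ‖(EuclideanSpace.equiv m ℝ).symm (A *ᵥ Pi.single j 1) i‖ := by simp
    _ ≤ ‖(EuclideanSpace.equiv m ℝ).symm (A *ᵥ Pi.single j 1)‖ := PiLp.norm_apply_le _ _
    _ ≤ ‖A‖ * ‖EuclideanSpace.single j (1 : ℝ)‖ :=
        A.l2_opNorm_mulVec (EuclideanSpace.single j 1)
    _ = ‖A‖ := by simp

lemma l2_opNorm_fin_two_le (A : Matrix (Fin 2) (Fin 2) ℝ) :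
    ‖A‖ ≤ max |A 0 0| |A 1 1| + max |A 0 1| |A 1 0| := by
  set J : Matrix (Fin 2) (Fin 2) ℝ := !![0, 1; 1, 0]
  have hA : A = diagonal ![A 0 0, A 1 1] + diagonal ![A 0 1, A 1 0] * J := by
    ext i j; fin_cases i <;> fin_cases j <;> simp [J]
  have hJ : J ∈ unitary (Matrix (Fin 2) (Fin 2) ℝ) := by
    rw [Unitary.mem_iff, star_eq_conjTranspose, conjTranspose_eq_transpose_of_trivial]
    constructor <;> ext i j <;> fin_cases i <;> fin_cases j <;>
      simp [J, mul_apply, Fin.sum_univ_two]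
  have hvec (a b : ℝ) : ‖![a, b]‖ ≤ max |a| |b| :=
    (pi_norm_le_iff_of_nonneg (by positivity)).2 <| Fin.forall_fin_two.2 (by simp)
  calc ‖A‖ ≤ ‖diagonal ![A 0 0, A 1 1]‖ + ‖diagonal ![A 0 1, A 1 0] * J‖ := by
        conv_lhs => rw [hA]
        exact norm_add_le _ _
    _ ≤ ‖diagonal ![A 0 0, A 1 1]‖ + ‖diagonal ![A 0 1, A 1 0]‖ * ‖J‖ := by
        gcongr; exact l2_opNorm_mul _ _
    _ ≤ _ := by
        rw [CStarRing.norm_of_mem_unitary hJ, mul_one, l2_opNorm_diagonal, l2_opNorm_diagonal]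
        exact add_le_add (hvec _ _) (hvec _ _)

lemma mulVec_fin_two_apply {i k : Fin 2} (hik : i ≠ k) (A : Matrix (Fin 2) (Fin 2) ℝ)
    (v : Fin 2 → ℝ) (l : Fin 2) : (A *ᵥ v) l = A l i * v i + A l k * v k := by
  rw [mulVec, dotProduct, Fin.sum_univ_two]
  fin_cases i <;> fin_cases k <;> first | exact absurd rfl hik | simp [add_comm]

end Matrix

def ConeExpanding (A : Matrix (Fin 2) (Fin 2) ℝ) (i k : Fin 2) (r : ℝ) : Prop :=
  ∀ v : Fin 2 → ℝ, |v k| ≤ |v i| → |(A *ᵥ v) k| ≤ |(A *ᵥ v) i| ∧ r * |v i| ≤ |(A *ᵥ v) i|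

lemma coneExpanding_of_abs_entries {A : Matrix (Fin 2) (Fin 2) ℝ} {i k : Fin 2} (hik : i ≠ k)
    {r : ℝ} (hr : r ≤ |A i i| - |A i k|) (hcone : |A k i| + |A k k| ≤ |A i i| - |A i k|) :
    ConeExpanding A i k r := by
  intro v hv
  rw [mulVec_fin_two_apply hik, mulVec_fin_two_apply hik]
  have hAk : |A k i * v i + A k k * v k| ≤ (|A k i| + |A k k|) * |v i| := by
    calc _ ≤ |A k i| * |v i| + |A k k| * |v k| := by
          simpa only [abs_mul] using abs_add_le (A k i * v i) (A k k * v k)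
      _ ≤ _ := by nlinarith [abs_nonneg (A k k)]
  have hAi : (|A i i| - |A i k|) * |v i| ≤ |A i i * v i + A i k * v k| := by
    calc _ ≤ |A i i| * |v i| - |A i k| * |v k| := by nlinarith [abs_nonneg (A i k)]
      _ ≤ _ := by
          simpa only [abs_mul] using abs_sub_abs_le_abs_add (A i i * v i) (A i k * v k)
  exact ⟨hAk.trans ((mul_le_mul_of_nonneg_right hcone (abs_nonneg _)).trans hAi),
    (mul_le_mul_of_nonneg_right hr (abs_nonneg _)).trans hAi⟩

section prodRev

variable (A : ℕ → Matrix (Fin 2) (Fin 2) ℝ)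

lemma prodRev_zero : prodRev A 0 = 1 := rfl

lemma prodRev_succ (n : ℕ) : prodRev A (n + 1) = A n * prodRev A n := by
  simp [prodRev, List.range_succ]

lemma norm_prodRev_le (n : ℕ) : ‖prodRev A n‖ ≤ ∏ j ∈ range n, ‖A j‖ := by
  induction n with
  | zero => simp [prodRev_zero]
  | succ n ih =>
    rw [prodRev_succ, prod_range_succ, mul_comm (∏ j ∈ range n, ‖A j‖)]
    exact (l2_opNorm_mul _ _).trans (mul_le_mul_of_nonneg_left ih (norm_nonneg _))

variable {A}

lemma prod_le_abs_prodRev_apply {i k : Fin 2} {r : ℕ → ℝ} (hik : i ≠ k) (hr : ∀ j, 0 ≤ r j)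
    (hA : ∀ j, ConeExpanding (A j) i k (r j)) (n : ℕ) :
    |prodRev A n k i| ≤ |prodRev A n i i| ∧ ∏ j ∈ range n, r j ≤ |prodRev A n i i| := by
  induction n with
  | zero => simp [prodRev_zero, one_apply, hik.symm]
  | succ n ih =>
    obtain ⟨hcone, hgrowth⟩ := hA n (fun l => prodRev A n l i) ih.1
    have hcol (l : Fin 2) : prodRev A (n + 1) l i = (A n *ᵥ fun l => prodRev A n l i) l := by
      rw [prodRev_succ]; rfl
    rw [hcol, hcol, prod_range_succ, mul_comm]
    exact ⟨hcone, (mul_le_mul_of_nonneg_left ih.2 (hr n)).trans hgrowth⟩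

lemma norm_prodRev_bounds {i k : Fin 2} {a : ℕ → ℝ} {ρ c : ℝ} (hik : i ≠ k)
    (ha : ∀ j, 0 ≤ a j) (hρ : 0 ≤ ρ) (hcone : ∀ j, ConeExpanding (A j) i k (ρ * a j))
    (hnorm : ∀ j, ‖A j‖ ≤ (1 + c) * a j) (n : ℕ) :
    ρ ^ n * ∏ j ∈ range n, a j ≤ ‖prodRev A n‖ ∧
      ‖prodRev A n‖ ≤ (1 + c) ^ n * ∏ j ∈ range n, a j := by
  constructor
  · calc ρ ^ n * ∏ j ∈ range n, a j = ∏ j ∈ range n, ρ * a j := by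
          rw [prod_mul_distrib, prod_const, card_range]
      _ ≤ |prodRev A n i i| :=
          (prod_le_abs_prodRev_apply hik (fun j => mul_nonneg hρ (ha j)) hcone n).2
      _ ≤ ‖prodRev A n‖ := abs_apply_le_l2_opNorm _ _ _
  · calc ‖prodRev A n‖ ≤ ∏ j ∈ range n, ‖A j‖ := norm_prodRev_le A n
      _ ≤ ∏ j ∈ range n, (1 + c) * a j :=
          prod_le_prod (fun j _ => norm_nonneg _) (fun j _ => hnorm j)
      _ = (1 + c) ^ n * ∏ j ∈ range n, a j := by
          rw [prod_mul_distrib, prod_const, card_range]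

end prodRev

lemma abs_log_sub_log_le {x P a : ℝ} (hP : 0 < P) (hlow : Real.exp (-a) * P ≤ x)
    (hup : x ≤ Real.exp a * P) : |Real.log x - Real.log P| ≤ a := by
  have hx : 0 < x := lt_of_lt_of_le (by positivity) hlow
  have h₁ := Real.log_le_log (by positivity) hlow
  have h₂ := Real.log_le_log hx hup
  rw [Real.log_mul (Real.exp_pos _).ne' hP.ne', Real.log_exp] at h₁ h₂
  exact abs_sub_le_iff.2 ⟨by linarith, by linarith⟩

lemma exists_abs_log_sub_le_of_pow_bounds {f : ℝ → ℕ → ℝ} {P : ℕ → ℝ} {C δ : ℝ}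
    (hP : ∀ n, 0 < P n) (hC : 0 < C) (hδ : 0 < δ)
    (hf : ∀ E, |E| ≤ δ → ∀ n,
      (1 - C * |E|) ^ n * P n ≤ f E n ∧ f E n ≤ (1 + C * |E|) ^ n * P n)
    {ε : ℝ} (hε : 0 < ε) :
    ∃ E₀ > 0, ∀ E, |E| < E₀ → ∀ n : ℕ,
      |(1 / n : ℝ) * Real.log (f E n) - (1 / n : ℝ) * Real.log (f 0 n)| ≤ ε := by
  have hexp : Real.exp (-ε) < 1 := Real.exp_lt_one_iff.2 (neg_lt_zero.2 hε)
  refine ⟨min δ ((1 - Real.exp (-ε)) / C), lt_min hδ (div_pos (by linarith) hC),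
    fun E hE n => ?_⟩
  have hEδ : |E| ≤ δ := (hE.trans_le (min_le_left _ _)).le
  have hCE : C * |E| ≤ 1 - Real.exp (-ε) := by
    have := (hE.trans_le (min_le_right _ _)).le
    rwa [le_div_iff₀ hC, mul_comm] at this
  have hPn := hP n
  have hf0 : f 0 n = P n := by
    have := hf 0 (by simpa using hδ.le) n
    simp only [abs_zero, mul_zero, sub_zero, add_zero, one_pow, one_mul] at this
    exact le_antisymm this.2 this.1
  have hlow : Real.exp (-(n * ε)) * P n ≤ f E n := by
    refine le_trans ?_ (hf E hEδ n).1
    rw [← mul_neg, Real.exp_nat_mul]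
    gcongr
    linarith
  have hup : f E n ≤ Real.exp (n * ε) * P n := by
    refine (hf E hEδ n).2.trans ?_
    have h₁ := Real.add_one_le_exp ε
    have h₂ := Real.add_one_le_exp (-ε)
    have := mul_nonneg hC.le (abs_nonneg E)
    rw [Real.exp_nat_mul]
    gcongr
    linarith
  have hlog := abs_log_sub_log_le hPn hlow hup
  rw [hf0, ← mul_sub, abs_mul, abs_of_nonneg (by positivity)]
  rcases Nat.eq_zero_or_pos n with rfl | hn
  · simpa using hε.le
  · calc (1 / n : ℝ) * |Real.log (f E n) - Real.log (P n)| ≤ (1 / n) * (n * ε) := by gcongr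
      _ = ε := by field_simp

section jacobiM

variable {θ E q : ℝ}

lemma abs_jacobiM_entries (hθ : 0 < θ) (hE : |E| ≤ 1) :
    |jacobiM θ E 0 0| = (1 - |E| ^ 2) * θ⁻¹ ∧ |jacobiM θ E 0 1| = |E| * θ ∧
      |jacobiM θ E 1 0| = |E| * θ⁻¹ ∧ |jacobiM θ E 1 1| = θ := by
  have hE2 : E ^ 2 ≤ 1 := by nlinarith [sq_abs E, abs_nonneg E]
  simp only [jacobiM, of_apply, cons_val', cons_val_zero, cons_val_one, empty_val',
    cons_val_fin_one]
  refine ⟨?_, ?_, ?_, ?_⟩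
  · rw [abs_div, abs_of_nonpos (by linarith), abs_of_pos hθ, sq_abs]; ring
  · rw [abs_mul, abs_neg, abs_of_pos hθ]
  · rw [abs_div, abs_of_pos hθ, div_eq_mul_inv]
  · rw [abs_neg, abs_of_pos hθ]

lemma norm_jacobiM_le (hθ : 0 < θ) (hE : |E| ≤ 1) :
    ‖jacobiM θ E‖ ≤ (1 + |E|) * max θ θ⁻¹ := by
  obtain ⟨h00, h01, h10, h11⟩ := abs_jacobiM_entries hθ hE
  have hdiag : max |jacobiM θ E 0 0| |jacobiM θ E 1 1| ≤ max θ θ⁻¹ := by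
    rw [h00, h11, max_comm θ]
    refine max_le_max ?_ le_rfl
    nlinarith [inv_pos.2 hθ, sq_nonneg |E|]
  have hoff : max |jacobiM θ E 0 1| |jacobiM θ E 1 0| = |E| * max θ θ⁻¹ := by
    rw [h01, h10, mul_max_of_nonneg _ _ (abs_nonneg E)]
  linarith [l2_opNorm_fin_two_le (jacobiM θ E)]

lemma coneExpanding_jacobiM_of_sq_le (hθ : 0 < θ) (hq : θ ^ 2 ≤ q) (hE : 3 * |E| + q ≤ 1) :
    ConeExpanding (jacobiM θ E) 0 1 ((1 - 2 * |E|) * θ⁻¹) := by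
  obtain ⟨h00, h01, h10, h11⟩ := abs_jacobiM_entries hθ (by nlinarith [sq_nonneg θ])
  have hθu : θ * θ⁻¹ = 1 := mul_inv_cancel₀ hθ.ne'
  have he := abs_nonneg E
  refine coneExpanding_of_abs_entries (by decide) ?_ ?_ <;> rw [h00, h01]
  · nlinarith [inv_pos.2 hθ]
  · rw [h10, h11]; nlinarith [inv_pos.2 hθ]

lemma coneExpanding_jacobiM_of_inv_sq_le (hθ : 0 < θ) (hq : θ⁻¹ ^ 2 ≤ q)
    (hE : 3 * |E| + q ≤ 1) : ConeExpanding (jacobiM θ E) 1 0 ((1 - 2 * |E|) * θ) := by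
  obtain ⟨h00, h01, h10, h11⟩ := abs_jacobiM_entries hθ (by nlinarith [sq_nonneg θ⁻¹])
  have hθu : θ * θ⁻¹ = 1 := mul_inv_cancel₀ hθ.ne'
  have he := abs_nonneg E
  refine coneExpanding_of_abs_entries (by decide) ?_ ?_ <;> rw [h11, h10]
  · nlinarith [inv_pos.2 hθ]
  · rw [h01, h00]; nlinarith [inv_pos.2 hθ]

end jacobiM

section prodRev_jacobiM

variable {θ : ℕ → ℝ} {q E : ℝ}

lemma norm_prodRev_jacobiM_bounds_of_sq_le (hθ : ∀ j, 0 < θ j) (hq : ∀ j, θ j ^ 2 ≤ q)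
    (hE : 3 * |E| + q ≤ 1) (n : ℕ) :
    (1 - 2 * |E|) ^ n * ∏ j ∈ range n, (θ j)⁻¹ ≤ ‖prodRev (fun j => jacobiM (θ j) E) n‖ ∧
      ‖prodRev (fun j => jacobiM (θ j) E) n‖ ≤ (1 + 2 * |E|) ^ n * ∏ j ∈ range n, (θ j)⁻¹ := by
  have he := abs_nonneg E
  have hq0 : 0 ≤ q := (sq_nonneg _).trans (hq 0)
  refine norm_prodRev_bounds (by decide) (fun j => (inv_pos.2 (hθ j)).le) (by linarith)
    (fun j => coneExpanding_jacobiM_of_sq_le (hθ j) (hq j) hE) (fun j => ?_) n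
  have hmax : max (θ j) (θ j)⁻¹ = (θ j)⁻¹ := by
    have hθ1 : θ j ≤ 1 := (sq_le_one_iff₀ (hθ j).le).1 (by linarith [hq j])
    exact max_eq_right (hθ1.trans ((one_le_inv₀ (hθ j)).2 hθ1))
  calc ‖jacobiM (θ j) E‖ ≤ (1 + |E|) * (θ j)⁻¹ := by
        simpa only [hmax] using norm_jacobiM_le (hθ j) (by linarith)
    _ ≤ (1 + 2 * |E|) * (θ j)⁻¹ :=
        mul_le_mul_of_nonneg_right (by linarith) (inv_pos.2 (hθ j)).le

lemma norm_prodRev_jacobiM_bounds_of_inv_sq_le (hθ : ∀ j, 0 < θ j)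
    (hq : ∀ j, (θ j)⁻¹ ^ 2 ≤ q) (hE : 3 * |E| + q ≤ 1) (n : ℕ) :
    (1 - 2 * |E|) ^ n * ∏ j ∈ range n, θ j ≤ ‖prodRev (fun j => jacobiM (θ j) E) n‖ ∧
      ‖prodRev (fun j => jacobiM (θ j) E) n‖ ≤ (1 + 2 * |E|) ^ n * ∏ j ∈ range n, θ j := by
  have he := abs_nonneg E
  have hq0 : 0 ≤ q := (sq_nonneg _).trans (hq 0)
  refine norm_prodRev_bounds (by decide) (fun j => (hθ j).le) (by linarith)
    (fun j => coneExpanding_jacobiM_of_inv_sq_le (hθ j) (hq j) hE) (fun j => ?_) n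
  have hmax : max (θ j) (θ j)⁻¹ = θ j := by
    have hθ1 : (θ j)⁻¹ ≤ 1 := (sq_le_one_iff₀ (inv_pos.2 (hθ j)).le).1 (by linarith [hq j])
    exact max_eq_left (hθ1.trans ((inv_le_one₀ (hθ j)).1 hθ1))
  calc ‖jacobiM (θ j) E‖ ≤ (1 + |E|) * θ j := by
        simpa only [hmax] using norm_jacobiM_le (hθ j) (by linarith)
    _ ≤ (1 + 2 * |E|) * θ j := mul_le_mul_of_nonneg_right (by linarith) (hθ j).le

lemma exists_norm_prodRev_jacobiM_bounds {β₁ β₂ : ℝ} (hθpos : ∀ j, 0 < θ j)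
    (hθ : (∀ j, β₁ ≤ θ j ∧ θ j ≤ 1 - β₂ ∧ 1 - β₂ < 1) ∨
          (∀ j, 1 < 1 + β₁ ∧ 1 + β₁ ≤ θ j ∧ θ j ≤ β₂)) :
    ∃ P : ℕ → ℝ, (∀ n, 0 < P n) ∧ ∃ δ > 0, ∀ E, |E| ≤ δ → ∀ n,
      (1 - 2 * |E|) ^ n * P n ≤ ‖prodRev (fun j => jacobiM (θ j) E) n‖ ∧
        ‖prodRev (fun j => jacobiM (θ j) E) n‖ ≤ (1 + 2 * |E|) ^ n * P n := by
  rcases hθ with hsmall | hlarge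
  · have hβ : 0 < 1 - β₂ := (hθpos 0).trans_le (hsmall 0).2.1
    have hq : (1 - β₂) ^ 2 < 1 := pow_lt_one₀ hβ.le (hsmall 0).2.2 two_ne_zero
    refine ⟨fun n => ∏ j ∈ range n, (θ j)⁻¹, fun n => prod_pos fun j _ => inv_pos.2 (hθpos j),
      (1 - (1 - β₂) ^ 2) / 3, by linarith, fun E hE n => ?_⟩
    exact norm_prodRev_jacobiM_bounds_of_sq_le hθpos
      (fun j => pow_le_pow_left₀ (hθpos j).le (hsmall j).2.1 2) (by linarith) n
  · have hβ : 0 < 1 + β₁ := zero_lt_one.trans (hlarge 0).1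
    have hq : (1 + β₁)⁻¹ ^ 2 < 1 :=
      pow_lt_one₀ (inv_pos.2 hβ).le (inv_lt_one_of_one_lt₀ (hlarge 0).1) two_ne_zero
    refine ⟨fun n => ∏ j ∈ range n, θ j, fun n => prod_pos fun j _ => hθpos j,
      (1 - (1 + β₁)⁻¹ ^ 2) / 3, by linarith, fun E hE n => ?_⟩
    exact norm_prodRev_jacobiM_bounds_of_inv_sq_le hθpos
      (fun j => pow_le_pow_left₀ (inv_pos.2 (hθpos j)).le (inv_anti₀ hβ (hlarge j).2.1) 2)
      (by linarith) n

end prodRev_jacobiM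

theorem jacobi_stability_at_zero_energy_general (β₁ β₂ : ℝ)
    (θ : ℕ → ℝ) (hθpos : ∀ j, 0 < θ j)
    (hθ : (∀ j, β₁ ≤ θ j ∧ θ j ≤ 1 - β₂ ∧ 1 - β₂ < 1) ∨
          (∀ j, 1 < 1 + β₁ ∧ 1 + β₁ ≤ θ j ∧ θ j ≤ β₂)) :
    ∀ ε₁ : ℝ, 0 < ε₁ →
    ∃ E₀ > (0 : ℝ), ∃ ξ > (0 : ℝ),
      ∀ E : ℝ, |E| < E₀ →
      ∀ n : ℕ, 1 ≤ n →
        |(1 / n : ℝ) * Real.log ‖prodRev (fun j => jacobiM (θ j) E) n‖ -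
            (1 / n : ℝ) * Real.log ‖prodRev (fun j => jacobiM (θ j) 0) n‖| ≤
          ε₁ + ξ / n := by
  intro ε₁ hε₁
  obtain ⟨P, hP, δ, hδ, hbounds⟩ := exists_norm_prodRev_jacobiM_bounds hθpos hθ
  obtain ⟨E₀, hE₀, hstable⟩ := exists_abs_log_sub_le_of_pow_bounds hP two_pos hδ hbounds hε₁
  exact ⟨E₀, hE₀, 1, one_pos, fun E hE n _ =>
    (hstable E hE n).trans (le_add_of_nonneg_right (by positivity))⟩

/-- **Stability of the Jacobi Lyapunov exponent at `E = 0`** (Corollary 5.5). If the hopping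
coefficients `θ_j` are uniformly inside `(0,1)` or uniformly inside `(1,∞)`, then for every
`ε₁ > 0` there are `E₀, ξ > 0` such that `|E| < E₀` implies, for all `n ≥ 1`,
`|(1/n) log ‖M_n(E) ⋯ M_1(E)‖ - (1/n) log ‖M_n(0) ⋯ M_1(0)‖| ≤ ε₁ + ξ/n`. -/
theorem jacobi_stability_at_zero_energy (β₁ β₂ : ℝ) (hβ₁ : 0 < β₁) (hβ₂ : 0 < β₂)
    (θ : ℕ → ℝ) (hθpos : ∀ j, 0 < θ j)
    (hθ : (∀ j, β₁ ≤ θ j ∧ θ j ≤ 1 - β₂ ∧ 1 - β₂ < 1) ∨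
          (∀ j, 1 < 1 + β₁ ∧ 1 + β₁ ≤ θ j ∧ θ j ≤ β₂)) :
    ∀ ε₁ : ℝ, 0 < ε₁ →
    ∃ E₀ > (0 : ℝ), ∃ ξ > (0 : ℝ),
      ∀ E : ℝ, |E| < E₀ →
      ∀ n : ℕ, 1 ≤ n →
        |(1 / n : ℝ) * Real.log ‖prodRev (fun j => jacobiM (θ j) E) n‖ -
            (1 / n : ℝ) * Real.log ‖prodRev (fun j => jacobiM (θ j) 0) n‖| ≤
          ε₁ + ξ / n :=
  jacobi_stability_at_zero_energy_general β₁ β₂ θ hθpos hθ
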